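/- Let d ≥ 3, R > 0, 1/2 ≤ η ≤ 1 and 0 ≤ M ≤ ηR/2, and let U = {z ∈ ℝ^d : |z_1 - 10R| ≤ R, z_2²+⋯+z_d² ≤ (ηR)²}. Then there exists C > 0 depending only on d such that for every point x ∈ ℝ^d of the form x = (x_1, M, 0, …, 0) with |x_1| ≤ R, |∫_U (z_2 - M)/|z-x|^d dz| ≤ C·M. -/

import Mathlib

/-!
The reflection `z_2 ↦ -z_2` preserves `U` and Lebesgue measure, so twice the integral is the
integral over `U` of the integrand at `z` plus the integrand at the mirror image of `z`, namely
`(z_2 - M) / |z - x|^d + (-z_2 - M) / |z - x'|^d` with `x' = (x_1, -M, 0, …, 0)`. Both distances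
are at least `8R` and differ by at most `|x - x'| = 2M`, while `|z_2| ≤ R`; hence the sum is
`O(M / R^d)`, and `vol U = O(R^d)`.
-/

open MeasureTheory

/-- The distant cylinder (``attracting galaxy``)
`U = {z ∈ ℝ^d : |z_1 - 10R| ≤ R, z_2²+⋯+z_d² ≤ (ηR)²}`. -/
def galaxyCylinder (d : ℕ) (h0 : 0 < d) (R η : ℝ) : Set (EuclideanSpace ℝ (Fin d)) :=
  {z | |z ⟨0, h0⟩ - 10 * R| ≤ R ∧
    ∑ i ∈ Finset.univ.filter (fun i : Fin d => i ≠ ⟨0, h0⟩), (z i) ^ 2 ≤ (η * R) ^ 2}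

/-- The point `(x_1, M, 0, …, 0) ∈ ℝ^d`. -/
noncomputable def sidePoint (d : ℕ) (h0 : 0 < d) (h1 : 1 < d) (x1 M : ℝ) :
    EuclideanSpace ℝ (Fin d) :=
  WithLp.toLp 2 (fun i : Fin d => if i = ⟨0, h0⟩ then x1 else if i = ⟨1, h1⟩ then M else 0)

theorem abs_inv_pow_sub_inv_pow_le {r a b : ℝ} (n : ℕ) (hr : 0 < r) (ha : r ≤ a) (hb : r ≤ b) :
    |(a ^ n)⁻¹ - (b ^ n)⁻¹| ≤ n * |a - b| / r ^ (n + 1) := by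
  obtain _ | n := n
  · simp
  have ha0 : 0 < a := hr.trans_le ha
  have hb0 : 0 < b := hr.trans_le hb
  have hinv : |a⁻¹ - b⁻¹| ≤ |a - b| / r ^ 2 := by
    rw [inv_sub_inv ha0.ne' hb0.ne', abs_div, abs_sub_comm, abs_of_pos (mul_pos ha0 hb0), sq]
    gcongr
  have hmax : max |a⁻¹| |b⁻¹| ≤ r⁻¹ := by
    rw [abs_of_pos (inv_pos.2 ha0), abs_of_pos (inv_pos.2 hb0)]
    exact max_le (inv_anti₀ hr ha) (inv_anti₀ hr hb)
  calc |(a ^ (n + 1))⁻¹ - (b ^ (n + 1))⁻¹|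
      = |a⁻¹ ^ (n + 1) - b⁻¹ ^ (n + 1)| := by rw [inv_pow, inv_pow]
    _ ≤ |a⁻¹ - b⁻¹| * (n + 1 : ℕ) * max |a⁻¹| |b⁻¹| ^ n := abs_pow_sub_pow_le _ _ _
    _ ≤ |a - b| / r ^ 2 * (n + 1 : ℕ) * r⁻¹ ^ n := by gcongr
    _ = (n + 1 : ℕ) * |a - b| / r ^ (n + 1 + 1) := by
      rw [inv_pow]
      field_simp
      ring

theorem abs_sub_div_pow_add_neg_sub_div_pow_le {r a b t ρ m : ℝ} (n : ℕ) (hr : 0 < r)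
    (ha : r ≤ a) (hb : r ≤ b) (ht : |t| ≤ ρ) (hm : 0 ≤ m) :
    |(t - m) / a ^ n + (-t - m) / b ^ n| ≤ ρ * (n * |a - b| / r ^ (n + 1)) + 2 * m / r ^ n := by
  have hinv {c : ℝ} (hc : r ≤ c) : 0 ≤ (c ^ n)⁻¹ ∧ (c ^ n)⁻¹ ≤ (r ^ n)⁻¹ :=
    ⟨by have := hr.trans_le hc; positivity, by gcongr⟩
  obtain ⟨ha0, ha1⟩ := hinv ha
  obtain ⟨hb0, hb1⟩ := hinv hb
  calc |(t - m) / a ^ n + (-t - m) / b ^ n|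
      = |t * ((a ^ n)⁻¹ - (b ^ n)⁻¹) - m * ((a ^ n)⁻¹ + (b ^ n)⁻¹)| := by congr 1; ring
    _ ≤ |t| * |(a ^ n)⁻¹ - (b ^ n)⁻¹| + m * ((a ^ n)⁻¹ + (b ^ n)⁻¹) := by
      grw [abs_sub, abs_mul, abs_mul, abs_of_nonneg hm, abs_of_nonneg (add_nonneg ha0 hb0)]
    _ ≤ ρ * (n * |a - b| / r ^ (n + 1)) + m * ((r ^ n)⁻¹ + (r ^ n)⁻¹) := by
      gcongr
      · exact (abs_nonneg _).trans ht
      · exact abs_inv_pow_sub_inv_pow_le n hr ha hb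
    _ = ρ * (n * |a - b| / r ^ (n + 1)) + 2 * m / r ^ n := by ring

theorem two_mul_norm_setIntegral_le_of_norm_add_comp_le {α E : Type*} [MeasurableSpace α]
    [NormedAddCommGroup E] [NormedSpace ℝ E] {μ : Measure α} {σ : α → α}
    (hσ : MeasurePreserving σ μ μ) (hσe : MeasurableEmbedding σ) {s : Set α} (hs : σ ⁻¹' s = s)
    (hμs : μ s < ⊤) {f : α → E} (hf : IntegrableOn f s μ) {C : ℝ}
    (hC : ∀ z ∈ s, ‖f z + f (σ z)‖ ≤ C) :
    2 * ‖∫ z in s, f z ∂μ‖ ≤ C * μ.real s := by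
  have hfσ : IntegrableOn (fun z => f (σ z)) s μ := by
    have := (hσ.integrableOn_comp_preimage hσe (s := s)).2 hf
    rwa [hs] at this
  have hswap : ∫ z in s, f (σ z) ∂μ = ∫ z in s, f z ∂μ := by
    conv_lhs => rw [← hs]
    exact hσ.setIntegral_preimage_emb hσe f s
  calc 2 * ‖∫ z in s, f z ∂μ‖ = ‖∫ z in s, (f z + f (σ z)) ∂μ‖ := by
        rw [integral_add hf hfσ, hswap, ← two_smul ℝ, norm_smul, Real.norm_two]
    _ ≤ C * μ.real s := norm_setIntegral_le_of_norm_le_const hμs hC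

theorem IsCompact.integrableOn_div_norm_sub_pow {E : Type*} [NormedAddCommGroup E]
    [MeasurableSpace E] [OpensMeasurableSpace E] {μ : Measure E} [IsFiniteMeasureOnCompacts μ]
    {K : Set E} (hK : IsCompact K) {x : E} (hx : x ∉ K) {g : E → ℝ} (hg : Continuous g) (n : ℕ) :
    IntegrableOn (fun z => g z / ‖z - x‖ ^ n) K μ := by
  refine ContinuousOn.integrableOn_compact hK
    (hg.continuousOn.div (by fun_prop) fun z hz => pow_ne_zero _ ?_)
  exact norm_ne_zero_iff.2 (sub_ne_zero.2 (ne_of_mem_of_not_mem hz hx))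

section coordReflection

variable {ι : Type*} [Fintype ι] [DecidableEq ι]

noncomputable def coordReflection (j : ι) : EuclideanSpace ℝ ι ≃ₗᵢ[ℝ] EuclideanSpace ℝ ι :=
  .piLpCongrRight 2 fun i => if i = j then .neg ℝ else .refl ℝ ℝ

theorem coordReflection_apply (j : ι) (z : EuclideanSpace ℝ ι) (i : ι) :
    coordReflection j z i = if i = j then -z i else z i := by
  by_cases h : i = j <;> simp [coordReflection, h]

theorem coordReflection_coordReflection (j : ι) (z : EuclideanSpace ℝ ι) :
    coordReflection j (coordReflection j z) = z := by
  ext i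
  by_cases h : i = j <;> simp [coordReflection_apply, h]

theorem norm_coordReflection_sub (j : ι) (z x : EuclideanSpace ℝ ι) :
    ‖coordReflection j z - x‖ = ‖z - coordReflection j x‖ := by
  rw [← (coordReflection j).norm_map, map_sub, coordReflection_coordReflection]

theorem norm_sub_coordReflection (j : ι) (x : EuclideanSpace ℝ ι) :
    ‖x - coordReflection j x‖ = 2 * |x j| := by
  have : x - coordReflection j x = EuclideanSpace.single j (2 * x j) := by
    ext i
    by_cases h : i = j
    · subst h
      rw [PiLp.sub_apply, coordReflection_apply, if_pos rfl, PiLp.single_apply, if_pos rfl]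
      ring
    · simp [coordReflection_apply, h]
  rw [this, PiLp.norm_single, Real.norm_eq_abs, abs_mul, abs_two]

theorem norm_add_comp_coordReflection_le {j : ι} {x z : EuclideanSpace ℝ ι} {r ρ m : ℝ}
    (n : ℕ) (hr : 0 < r) (hzx : r ≤ ‖z - x‖) (hzσx : r ≤ ‖z - coordReflection j x‖)
    (hz : |z j| ≤ ρ) (hm : 0 ≤ m) :
    ‖(z j - m) / ‖z - x‖ ^ n + (coordReflection j z j - m) / ‖coordReflection j z - x‖ ^ n‖ ≤
      ρ * (n * (2 * |x j|) / r ^ (n + 1)) + 2 * m / r ^ n := by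
  have hdiff : |‖z - x‖ - ‖z - coordReflection j x‖| ≤ 2 * |x j| := by
    grw [abs_norm_sub_norm_le, sub_sub_sub_cancel_left, norm_sub_rev, norm_sub_coordReflection]
  rw [Real.norm_eq_abs, norm_coordReflection_sub, coordReflection_apply, if_pos rfl]
  grw [abs_sub_div_pow_add_neg_sub_div_pow_le n hr hzx hzσx hz hm, hdiff]
  exact (abs_nonneg _).trans hz

end coordReflection

section galaxyCylinder

variable {d : ℕ} {h0 : 0 < d} {R η : ℝ}

theorem isClosed_galaxyCylinder : IsClosed (galaxyCylinder d h0 R η) := by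
  rw [galaxyCylinder, Set.ofPred_and]
  exact (isClosed_le (by fun_prop) continuous_const).inter
    (isClosed_le (by fun_prop) continuous_const)

theorem galaxyCylinder_subset_closedBall :
    galaxyCylinder d h0 R η ⊆
      Metric.closedBall (EuclideanSpace.single (⟨0, h0⟩ : Fin d) (10 * R))
        √(R ^ 2 + (η * R) ^ 2) := by
  rintro z ⟨hz0, hz⟩
  rw [Metric.mem_closedBall, dist_eq_norm]
  refine Real.le_sqrt_of_sq_le ?_
  rw [EuclideanSpace.real_norm_sq_eq, ← Finset.add_sum_erase _ _ (Finset.mem_univ ⟨0, h0⟩)]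
  rw [Finset.filter_ne'] at hz
  have hz0' : (z ⟨0, h0⟩ - 10 * R) ^ 2 ≤ R ^ 2 := by
    rw [← sq_abs]; exact pow_le_pow_left₀ (abs_nonneg _) hz0 2
  refine add_le_add (by simpa using hz0') (le_of_eq_of_le (Finset.sum_congr rfl ?_) hz)
  intro i hi
  simp [(Finset.ne_of_mem_erase hi)]

theorem isCompact_galaxyCylinder : IsCompact (galaxyCylinder d h0 R η) :=
  Metric.isCompact_of_isClosed_isBounded isClosed_galaxyCylinder
    (Metric.isBounded_closedBall.subset galaxyCylinder_subset_closedBall)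

theorem measureReal_galaxyCylinder_le (hR : 0 ≤ R) (hη : |η| ≤ 1) :
    volume.real (galaxyCylinder d h0 R η) ≤
      (2 * R) ^ d * volume.real (Metric.closedBall (0 : EuclideanSpace ℝ (Fin d)) 1) := by
  have hrad : √(R ^ 2 + (η * R) ^ 2) ≤ 2 * R := by
    rw [Real.sqrt_le_left (by positivity)]
    have : (η * R) ^ 2 ≤ R ^ 2 := by
      rw [sq_le_sq, abs_mul, abs_of_nonneg hR]
      exact mul_le_of_le_one_left hR hη
    nlinarith
  calc volume.real (galaxyCylinder d h0 R η)
      ≤ volume.real (Metric.closedBall (EuclideanSpace.single (⟨0, h0⟩ : Fin d) (10 * R))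
          √(R ^ 2 + (η * R) ^ 2)) :=
        measureReal_mono galaxyCylinder_subset_closedBall measure_closedBall_lt_top.ne
    _ = √(R ^ 2 + (η * R) ^ 2) ^ d *
          volume.real (Metric.closedBall (0 : EuclideanSpace ℝ (Fin d)) 1) := by
        rw [Measure.addHaar_real_closedBall' _ _ (Real.sqrt_nonneg _), finrank_euclideanSpace_fin]
    _ ≤ (2 * R) ^ d * volume.real (Metric.closedBall (0 : EuclideanSpace ℝ (Fin d)) 1) := by
        gcongr

theorem coordReflection_preimage_galaxyCylinder {j : Fin d} (hj : j ≠ ⟨0, h0⟩) :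
    coordReflection j ⁻¹' galaxyCylinder d h0 R η = galaxyCylinder d h0 R η := by
  ext z
  simp [galaxyCylinder, coordReflection_apply, Ne.symm hj, apply_ite (· ^ 2)]

theorem abs_apply_le_of_mem_galaxyCylinder {j : Fin d} (hj : j ≠ ⟨0, h0⟩)
    {z : EuclideanSpace ℝ (Fin d)} (hz : z ∈ galaxyCylinder d h0 R η) : |z j| ≤ |η * R| :=
  sq_le_sq.1 <| (Finset.single_le_sum (f := fun i => z i ^ 2) (fun _ _ => sq_nonneg _)
    (by simpa using hj)).trans hz.2

theorem le_norm_sub_of_mem_galaxyCylinder {z w : EuclideanSpace ℝ (Fin d)}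
    (hz : z ∈ galaxyCylinder d h0 R η) (hw : |w ⟨0, h0⟩| ≤ R) : 8 * R ≤ ‖z - w‖ := by
  have hz0 := abs_le.1 hz.1
  have hw0 := abs_le.1 hw
  calc 8 * R ≤ |(z - w) ⟨0, h0⟩| := le_abs.2 (Or.inl (by rw [PiLp.sub_apply]; linarith))
    _ ≤ ‖z - w‖ := by simpa using PiLp.norm_apply_le (z - w) ⟨0, h0⟩

end galaxyCylinder

section sidePoint

variable {d : ℕ} {h0 : 0 < d} {h1 : 1 < d} {R η x1 M : ℝ}

@[simp]
theorem sidePoint_apply_zero : sidePoint d h0 h1 x1 M ⟨0, h0⟩ = x1 := by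
  simp [sidePoint]

@[simp]
theorem sidePoint_apply_one : sidePoint d h0 h1 x1 M ⟨1, h1⟩ = M := by
  simp [sidePoint]

theorem coordReflection_sidePoint :
    coordReflection ⟨1, h1⟩ (sidePoint d h0 h1 x1 M) = sidePoint d h0 h1 x1 (-M) := by
  ext i
  by_cases h : i = ⟨1, h1⟩
  · subst h
    simp [coordReflection_apply]
  · simp [coordReflection_apply, sidePoint, h]

theorem le_norm_sub_sidePoint {z : EuclideanSpace ℝ (Fin d)} (hz : z ∈ galaxyCylinder d h0 R η)
    (hx1 : |x1| ≤ R) : 8 * R ≤ ‖z - sidePoint d h0 h1 x1 M‖ :=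
  le_norm_sub_of_mem_galaxyCylinder hz (by simpa using hx1)

theorem sidePoint_notMem_galaxyCylinder (hR : 0 < R) (hx1 : |x1| ≤ R) :
    sidePoint d h0 h1 x1 M ∉ galaxyCylinder d h0 R η := fun hx => by
  have := le_norm_sub_sidePoint (M := M) (h1 := h1) hx hx1
  rw [sub_self, norm_zero] at this
  linarith

theorem norm_pull_add_pull_coordReflection_le (hR : 0 < R) (hη : |η| ≤ 1) (hM : 0 ≤ M)
    (hx1 : |x1| ≤ R) {z : EuclideanSpace ℝ (Fin d)} (hz : z ∈ galaxyCylinder d h0 R η) :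
    ‖(z ⟨1, h1⟩ - M) / ‖z - sidePoint d h0 h1 x1 M‖ ^ d +
        (coordReflection ⟨1, h1⟩ z ⟨1, h1⟩ - M) /
          ‖coordReflection ⟨1, h1⟩ z - sidePoint d h0 h1 x1 M‖ ^ d‖ ≤
      R * (d * (2 * M) / (8 * R) ^ (d + 1)) + 2 * M / (8 * R) ^ d := by
  have hz1 : |z ⟨1, h1⟩| ≤ R :=
    (abs_apply_le_of_mem_galaxyCylinder (by simp [Fin.ext_iff]) hz).trans
      (by rw [abs_mul, abs_of_pos hR]; exact mul_le_of_le_one_left hR.le hη)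
  have := norm_add_comp_coordReflection_le d (by positivity)
    (le_norm_sub_sidePoint (M := M) hz hx1)
    (by rw [coordReflection_sidePoint]; exact le_norm_sub_sidePoint hz hx1) hz1 hM
  simpa [abs_of_nonneg hM] using this

end sidePoint

/-- Let `d ≥ 3`, `R > 0`, `1/2 ≤ η ≤ 1` and `0 ≤ M ≤ ηR/2`. There exists
`C > 0` depending only on `d` such that for every `x = (x_1, M, 0, …, 0)` with `|x_1| ≤ R`,
`|∫_U (z_2 - M)/|z-x|^d dz| ≤ C·M`. -/
theorem galaxy_radial_pull_bound (d : ℕ) (hd : 3 ≤ d) :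
    ∃ C : ℝ, 0 < C ∧
      ∀ R η M : ℝ, 0 < R → 1 / 2 ≤ η → η ≤ 1 → 0 ≤ M → M ≤ η * R / 2 →
      ∀ x1 : ℝ, |x1| ≤ R →
        |∫ z in galaxyCylinder d (by omega) R η,
            (z ⟨1, by omega⟩ - M) / ‖z - sidePoint d (by omega) (by omega) x1 M‖ ^ d| ≤
          C * M := by
  have h0 : 0 < d := by omega
  have h1 : 1 < d := by omega
  set κ := volume.real (Metric.closedBall (0 : EuclideanSpace ℝ (Fin d)) 1)
  have hκ : 0 < κ := ENNReal.toReal_pos (Metric.measure_closedBall_pos _ _ one_pos).ne'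
    measure_closedBall_lt_top.ne
  refine ⟨(d + 8) * κ / (8 * 4 ^ d), by positivity, ?_⟩
  intro R η M hR hη1 hη2 hM0 hM1 x1 hx1
  have hη : |η| ≤ 1 := abs_le.2 ⟨by linarith, hη2⟩
  have hsym := two_mul_norm_setIntegral_le_of_norm_add_comp_le
    (coordReflection (⟨1, h1⟩ : Fin d)).measurePreserving
    (coordReflection _).toHomeomorph.measurableEmbedding
    (coordReflection_preimage_galaxyCylinder (R := R) (η := η) (by simp [Fin.ext_iff]))
    isCompact_galaxyCylinder.measure_lt_top
    (isCompact_galaxyCylinder.integrableOn_div_norm_sub_pow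
      (sidePoint_notMem_galaxyCylinder (h0 := h0) (h1 := h1) (M := M) (η := η) hR hx1)
      (by fun_prop) d)
    (fun z hz => norm_pull_add_pull_coordReflection_le hR hη hM0 hx1 hz)
  have hvol := measureReal_galaxyCylinder_le (h0 := h0) hR.le hη
  have hconst : (R * (d * (2 * M) / (8 * R) ^ (d + 1)) + 2 * M / (8 * R) ^ d) *
      ((2 * R) ^ d * κ) = 2 * ((d + 8) * κ / (8 * 4 ^ d) * M) := by
    have h8 : (8 : ℝ) ^ d = 2 ^ d * 4 ^ d := by rw [← mul_pow]; norm_num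
    rw [mul_pow, mul_pow, pow_succ, h8]
    field_simp
    ring
  rw [Real.norm_eq_abs] at hsym
  grw [hvol, hconst] at hsym
  linarith
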